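/- arXiv:0911.4706 — 6 statements merged into one kernel-verified Lean document; each statement's English description precedes it below -/
import Mathlib

section
/- Let A and B be bounded operators on a Hilbert space with A self-adjoint and A ≥ 0. Then ‖[A, B]‖ ≤ ‖A‖ · ‖B‖. -/
open scoped NNReal Pointwise

/-- In a C*-algebra, a nonneg element shifted by half its norm has norm at most half. -/
lemma half_shift_norm_le {𝒜 : Type*} [CStarAlgebra 𝒜] [PartialOrder 𝒜] [StarOrderedRing 𝒜]
    {a : 𝒜} (ha : 0 ≤ a) :
    ‖a - algebraMap ℝ 𝒜 (‖a‖ / 2)‖ ≤ ‖a‖ / 2 := by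
  obtain h | h := subsingleton_or_nontrivial 𝒜
  · simp [Subsingleton.elim (a - algebraMap ℝ 𝒜 (‖a‖ / 2)) 0, norm_nonneg a,
      div_nonneg (norm_nonneg a) (by norm_num : (0:ℝ) ≤ 2)]
  · set c := a - algebraMap ℝ 𝒜 (‖a‖ / 2) with hc
    have hsa : IsSelfAdjoint c := by
      have haa : IsSelfAdjoint a := .of_nonneg ha
      exact haa.sub (IsSelfAdjoint.algebraMap 𝒜 (isSelfAdjoint_iff.mpr rfl))
    have hspec : ∀ x ∈ spectrum ℝ c, |x| ≤ ‖a‖ / 2 := by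
      intro x hx
      have : x ∈ spectrum ℝ a - ({‖a‖ / 2} : Set ℝ) := by
        rwa [spectrum.sub_singleton_eq]
      obtain ⟨μ, hμ, t, ht, rfl⟩ := this
      simp only [Set.mem_singleton_iff] at ht
      subst ht
      have h1 : 0 ≤ μ := spectrum_nonneg_of_nonneg ha hμ
      have h2 : μ ≤ ‖a‖ := (Real.le_norm_self μ).trans (spectrum.norm_le_norm_of_mem hμ)
      rw [abs_le]
      constructor <;> linarith
    obtain h | h := CStarAlgebra.norm_or_neg_norm_mem_spectrum (a := c) hsa
    · simpa using hspec _ h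
    · have := hspec _ h
      simpa using this

/-- Let `A` and `B` be bounded operators on a Hilbert space with `A` self-adjoint and
`A ≥ 0` (i.e. `A` is a positive operator). Then `‖[A, B]‖ ≤ ‖A‖ * ‖B‖`. -/
theorem commutator_norm_le_of_positive
    {E : Type*} [NormedAddCommGroup E] [InnerProductSpace ℂ E] [CompleteSpace E]
    (A B : E →L[ℂ] E) (hA : A.IsPositive) :
    ‖A * B - B * A‖ ≤ ‖A‖ * ‖B‖ := by
  have hA' : 0 ≤ A := (ContinuousLinearMap.nonneg_iff_isPositive A).mpr hA
  set C : E →L[ℂ] E := A - algebraMap ℝ (E →L[ℂ] E) (‖A‖ / 2) with hC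
  have hCnorm : ‖C‖ ≤ ‖A‖ / 2 := half_shift_norm_le hA'
  have hcomm : A * B - B * A = C * B - B * C := by
    rw [hC]
    simp only [sub_mul, mul_sub]
    rw [Algebra.commutes]
    abel
  rw [hcomm]
  calc ‖C * B - B * C‖ ≤ ‖C * B‖ + ‖B * C‖ := norm_sub_le _ _
    _ ≤ ‖C‖ * ‖B‖ + ‖B‖ * ‖C‖ := add_le_add (norm_mul_le _ _) (norm_mul_le _ _)
    _ = 2 * ‖C‖ * ‖B‖ := by ring
    _ ≤ 2 * (‖A‖ / 2) * ‖B‖ := by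
        gcongr
    _ = ‖A‖ * ‖B‖ := by ring
end

section
/- Let b be a real number with 0 ≤ b ≤ 1, let θ be real, let m be a natural number, and suppose |b − e^{iθ}| ≤ ε with ε ≤ 1/2. Then |b^m − e^{imθ}| ≤ √(7/3) · m · ε. -/
open Complex

/-! Both `b` and `e^{iθ}` lie in the closed unit disc, on which `z ↦ z ^ m` is `m`-Lipschitz,
so in fact `|b^m - e^{imθ}| ≤ m ε`. -/

theorem norm_pow_sub_pow_le_nat_mul {R : Type*} [SeminormedRing R] [NormOneClass R] {z w : R}
    (hz : ‖z‖ ≤ 1) (hw : ‖w‖ ≤ 1) (n : ℕ) : ‖z ^ n - w ^ n‖ ≤ n * ‖z - w‖ := by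
  induction n with
  | zero => simp
  | succ n ih =>
    have hwn : ‖w ^ n‖ ≤ 1 := (norm_pow_le w n).trans (pow_le_one₀ (norm_nonneg w) hw)
    calc ‖z ^ (n + 1) - w ^ (n + 1)‖ = ‖z * (z ^ n - w ^ n) + (z - w) * w ^ n‖ := by
          rw [pow_succ', pow_succ']; noncomm_ring
      _ ≤ ‖z‖ * ‖z ^ n - w ^ n‖ + ‖z - w‖ * ‖w ^ n‖ :=
          (norm_add_le _ _).trans (add_le_add (norm_mul_le _ _) (norm_mul_le _ _))
      _ ≤ 1 * (n * ‖z - w‖) + ‖z - w‖ * 1 := by gcongr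
      _ = (n + 1 : ℕ) * ‖z - w‖ := by push_cast; ring

theorem pow_sub_exp_abs_le_general (b θ ε : ℝ) (m : ℕ)
    (hb0 : 0 ≤ b) (hb1 : b ≤ 1)
    (h : ‖(b : ℂ) - Complex.exp (θ * Complex.I)‖ ≤ ε) :
    ‖(b : ℂ) ^ m - Complex.exp ((m : ℂ) * θ * Complex.I)‖ ≤
      Real.sqrt (7 / 3) * m * ε := by
  have hb : ‖(b : ℂ)‖ ≤ 1 := by rwa [Complex.norm_real, Real.norm_of_nonneg hb0]
  have hsqrt : 1 ≤ Real.sqrt (7 / 3) := Real.one_le_sqrt.mpr (by norm_num)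
  have hmε : 0 ≤ (m : ℝ) * ε := mul_nonneg m.cast_nonneg ((norm_nonneg _).trans h)
  calc ‖(b : ℂ) ^ m - Complex.exp ((m : ℂ) * θ * Complex.I)‖
      = ‖(b : ℂ) ^ m - Complex.exp (θ * Complex.I) ^ m‖ := by rw [mul_assoc, Complex.exp_nat_mul]
    _ ≤ m * ‖(b : ℂ) - Complex.exp (θ * Complex.I)‖ :=
        norm_pow_sub_pow_le_nat_mul hb (Complex.norm_exp_ofReal_mul_I θ).le m
    _ ≤ m * ε := by gcongr
    _ ≤ Real.sqrt (7 / 3) * m * ε := by rw [mul_assoc]; exact le_mul_of_one_le_left hmε hsqrt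

/-- If `0 ≤ b ≤ 1`, `|b - e^{iθ}| ≤ ε` and `ε ≤ 1/2`, then
`|b^m - e^{imθ}| ≤ √(7/3) * m * ε`. -/
theorem pow_sub_exp_abs_le (b θ ε : ℝ) (m : ℕ)
    (hb0 : 0 ≤ b) (hb1 : b ≤ 1) (hε : ε ≤ 1 / 2)
    (h : ‖(b : ℂ) - Complex.exp (θ * Complex.I)‖ ≤ ε) :
    ‖(b : ℂ) ^ m - Complex.exp ((m : ℂ) * θ * Complex.I)‖ ≤
      Real.sqrt (7 / 3) * m * ε :=
  pow_sub_exp_abs_le_general b θ ε m hb0 hb1 h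
end

section
/- For every real number b with 0 ≤ b ≤ 1 and every real number θ, and any natural number m, if |b − e^{iθ}| ≤ ε, then |sin θ| ≤ ε and (if additionally ε ≤ 1/2) 1 − cos(mθ) ≤ (2/3)·m²·ε². -/
/-!
Bounding `1 - cos (mθ)` needs no reduction of `θ` modulo `2π`: the identity
`1 - cos (2y) = 2 sin² y` together with `|sin (n y)| ≤ n |sin y|` gives
`1 - cos (mθ) ≤ m² (1 - cos θ)`, and `(1 - cos θ)(1 + cos θ) = sin² θ` with `cos θ ≥ 1/2`
gives `1 - cos θ ≤ (2/3) sin² θ`. Both `sin θ` and `b - cos θ` are coordinates of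
`b - e^{iθ}`, so they are bounded by `ε`; for `ε ≤ 1/2` and `b ≥ 0` this forces `cos θ ≥ 1/2`.
-/

open Real

namespace Real

theorem abs_sin_nat_mul_le (x : ℝ) (n : ℕ) : |sin (n * x)| ≤ n * |sin x| := by
  induction n with
  | zero => simp
  | succ n ih =>
    have hsin : sin ((n + 1 : ℕ) * x) = sin (n * x) * cos x + cos (n * x) * sin x := by
      rw [← sin_add]; push_cast; ring_nf
    calc |sin ((n + 1 : ℕ) * x)|
        ≤ |sin (n * x)| * |cos x| + |cos (n * x)| * |sin x| := by
          rw [hsin, ← abs_mul, ← abs_mul]; exact abs_add_le _ _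
      _ ≤ |sin (n * x)| * 1 + 1 * |sin x| := by
          gcongr <;> exact abs_cos_le_one _
      _ ≤ ((n + 1 : ℕ) : ℝ) * |sin x| := by push_cast; linarith

theorem one_sub_cos_nat_mul_le (x : ℝ) (n : ℕ) : 1 - cos (n * x) ≤ n ^ 2 * (1 - cos x) := by
  have half_angle (y : ℝ) : 1 - cos y = 2 * sin (y / 2) ^ 2 := by
    have := cos_two_mul_eq_one_sub (y / 2)
    rw [mul_div_cancel₀ y two_ne_zero] at this
    linarith
  have hsin := abs_sin_nat_mul_le (x / 2) n
  rw [half_angle, half_angle, mul_div_assoc, ← sq_abs, ← sq_abs (sin (x / 2))]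
  nlinarith [abs_nonneg (sin (n * (x / 2)))]

theorem one_sub_cos_le_of_half_le_cos {x : ℝ} (h : 1 / 2 ≤ cos x) :
    1 - cos x ≤ 2 / 3 * sin x ^ 2 := by
  nlinarith [sin_sq_add_cos_sq x, cos_le_one x]

end Real

theorem abs_sin_le_norm_ofReal_sub_exp_mul_I (b θ : ℝ) :
    |sin θ| ≤ ‖(b : ℂ) - Complex.exp (θ * Complex.I)‖ := by
  simpa [Complex.exp_ofReal_mul_I_im] using
    Complex.abs_im_le_norm ((b : ℂ) - Complex.exp (θ * Complex.I))

theorem abs_sub_cos_le_norm_ofReal_sub_exp_mul_I (b θ : ℝ) :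
    |b - cos θ| ≤ ‖(b : ℂ) - Complex.exp (θ * Complex.I)‖ := by
  simpa [Complex.exp_ofReal_mul_I_re] using
    Complex.abs_re_le_norm ((b : ℂ) - Complex.exp (θ * Complex.I))

/-- `sin² θ ≤ 1/4` leaves only `|cos θ| ≥ √3/2`, and `cos θ ≥ b - 1/2 ≥ -1/2` excludes the
negative branch. -/
theorem half_le_cos_of_norm_ofReal_sub_exp_mul_I_le {b θ : ℝ} (hb : 0 ≤ b)
    (h : ‖(b : ℂ) - Complex.exp (θ * Complex.I)‖ ≤ 1 / 2) : 1 / 2 ≤ cos θ := by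
  have hsin := (abs_sin_le_norm_ofReal_sub_exp_mul_I b θ).trans h
  have hcos := (abs_sub_cos_le_norm_ofReal_sub_exp_mul_I b θ).trans h
  rw [abs_le] at hsin hcos
  nlinarith [sin_sq_add_cos_sq θ]

theorem sin_abs_le_and_one_sub_cos_le_general (b θ ε : ℝ) (m : ℕ)
    (hb0 : 0 ≤ b)
    (h : ‖(b : ℂ) - Complex.exp (θ * Complex.I)‖ ≤ ε) :
    |Real.sin θ| ≤ ε ∧
      (ε ≤ 1 / 2 → 1 - Real.cos (m * θ) ≤ (2 / 3) * m ^ 2 * ε ^ 2) := by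
  have hsin : |sin θ| ≤ ε := (abs_sin_le_norm_ofReal_sub_exp_mul_I b θ).trans h
  refine ⟨hsin, fun hε => ?_⟩
  have hcos : 1 / 2 ≤ cos θ := half_le_cos_of_norm_ofReal_sub_exp_mul_I_le hb0 (h.trans hε)
  have hsin_sq : sin θ ^ 2 ≤ ε ^ 2 := sq_le_sq' (abs_le.1 hsin).1 (abs_le.1 hsin).2
  calc 1 - cos (m * θ) ≤ m ^ 2 * (1 - cos θ) := one_sub_cos_nat_mul_le θ m
    _ ≤ m ^ 2 * (2 / 3 * sin θ ^ 2) := by gcongr; exact one_sub_cos_le_of_half_le_cos hcos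
    _ ≤ 2 / 3 * m ^ 2 * ε ^ 2 := by nlinarith [sq_nonneg (m : ℝ)]

/-- If `0 ≤ b ≤ 1` and `|b - e^{iθ}| ≤ ε`, then `|sin θ| ≤ ε`, and if additionally
`ε ≤ 1/2`, then `1 - cos (mθ) ≤ (2/3) * m² * ε²` for any natural number `m`. -/
theorem sin_abs_le_and_one_sub_cos_le (b θ ε : ℝ) (m : ℕ)
    (hb0 : 0 ≤ b) (hb1 : b ≤ 1)
    (h : ‖(b : ℂ) - Complex.exp (θ * Complex.I)‖ ≤ ε) :
    |Real.sin θ| ≤ ε ∧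
      (ε ≤ 1 / 2 → 1 - Real.cos (m * θ) ≤ (2 / 3) * m ^ 2 * ε ^ 2) :=
  sin_abs_le_and_one_sub_cos_le_general b θ ε m hb0 h
end

section
/- Let U_X, U_Y, U'_X, U'_Y be unitaries on a finite-dimensional Hilbert space, Ψ₀ a unit vector, and P₀ = |Ψ₀⟩⟨Ψ₀|. Set δ_X = ‖(1−P₀)U_XΨ₀‖, δ_Y = ‖(1−P₀)U_YΨ₀‖, and assume ‖(1−P₀)U_X^†Ψ₀‖ = δ_X and ‖(1−P₀)U_Y^†Ψ₀‖ = δ_Y. Then |⟨Ψ₀, U_Y^† U_X^† U_Y U_X Ψ₀⟩ − 1| ≤ 2(δ_X² + δ_Y²) + 4 δ_X δ_Y + δ_X² δ_Y². -/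
/-!
Write `U Ψ₀ = ⟪Ψ₀, U Ψ₀⟫ Ψ₀ + (1 - P₀) U Ψ₀` for each unitary. Composing two such
decompositions, both `U_X U_Y Ψ₀` and `U_Y U_X Ψ₀` equal `a b Ψ₀` plus a remainder of norm at most
`δ_X + δ_Y`, where `a = ⟪Ψ₀, U_X Ψ₀⟫` and `b = ⟪Ψ₀, U_Y Ψ₀⟫`. The overlap of a remainder with `Ψ₀`
is second order: `⟪Ψ₀, V x⟫ = ⟪(1 - P₀) V† Ψ₀, x⟫` for `x ⊥ Ψ₀`, hence at most `δ_X δ_Y`.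
Finally `|a b|² = (1 - δ_X²)(1 - δ_Y²)` by Pythagoras.
-/

open scoped InnerProductSpace
open ContinuousLinearMap

section OrthPart

variable {E : Type*} [NormedAddCommGroup E] [InnerProductSpace ℂ E]

/-- `(1 - P₀) v` for the projection `P₀ = |Ψ⟩⟨Ψ|`, when `‖Ψ‖ = 1`. -/
noncomputable def orthPart (Ψ v : E) : E := v - ⟪Ψ, v⟫_ℂ • Ψ

variable {Ψ : E}

lemma inner_smul_add_orthPart (Ψ v : E) : ⟪Ψ, v⟫_ℂ • Ψ + orthPart Ψ v = v :=
  add_sub_cancel _ _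

lemma inner_orthPart (hΨ : ‖Ψ‖ = 1) (v : E) : ⟪Ψ, orthPart Ψ v⟫_ℂ = 0 := by
  simp [orthPart, inner_self_eq_norm_sq_to_K, hΨ]

lemma norm_inner_sq_add_norm_orthPart_sq (hΨ : ‖Ψ‖ = 1) (v : E) :
    ‖⟪Ψ, v⟫_ℂ‖ ^ 2 + ‖orthPart Ψ v‖ ^ 2 = ‖v‖ ^ 2 := by
  have horth : ⟪⟪Ψ, v⟫_ℂ • Ψ, orthPart Ψ v⟫_ℂ = 0 := by
    rw [inner_smul_left, inner_orthPart hΨ, mul_zero]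
  conv_rhs => rw [← inner_smul_add_orthPart Ψ v]
  rw [sq, sq, sq, norm_add_sq_eq_norm_sq_add_norm_sq_of_inner_eq_zero _ _ horth, norm_smul, hΨ,
    mul_one]

lemma norm_inner_smul_add_smul_add_sub_one_le (hΨ : ‖Ψ‖ = 1) (c : ℂ) (w₁ w₂ : E) :
    ‖⟪c • Ψ + w₁, c • Ψ + w₂⟫_ℂ - 1‖ ≤
      |‖c‖ ^ 2 - 1| + ‖c‖ * (‖⟪Ψ, w₁⟫_ℂ‖ + ‖⟪Ψ, w₂⟫_ℂ‖) + ‖w₁‖ * ‖w₂‖ := by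
  have hΨΨ : ⟪Ψ, Ψ⟫_ℂ = 1 := by simp [inner_self_eq_norm_sq_to_K, hΨ]
  have hexpand : ⟪c • Ψ + w₁, c • Ψ + w₂⟫_ℂ - 1 = ((‖c‖ ^ 2 - 1 : ℝ) : ℂ) +
      (starRingEnd ℂ c * ⟪Ψ, w₂⟫_ℂ + c * ⟪w₁, Ψ⟫_ℂ) + ⟪w₁, w₂⟫_ℂ := by
    simp only [inner_add_left, inner_add_right, inner_smul_left, inner_smul_right, hΨΨ]
    push_cast
    rw [← Complex.conj_mul']
    ring
  rw [hexpand]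
  refine (norm_add₃_le ..).trans (add_le_add (add_le_add ?_ ?_) (norm_inner_le_norm _ _))
  · rw [Complex.norm_real, Real.norm_eq_abs]
  · refine (norm_add_le _ _).trans (le_of_eq ?_)
    rw [norm_mul, norm_mul, Complex.norm_conj, norm_inner_symm w₁]
    ring

variable [CompleteSpace E]

lemma inner_apply_eq_inner_orthPart_adjoint (A : E →L[ℂ] E) {x : E} (hx : ⟪Ψ, x⟫_ℂ = 0) :
    ⟪Ψ, A x⟫_ℂ = ⟪orthPart Ψ (adjoint A Ψ), x⟫_ℂ := by
  rw [← adjoint_inner_left, orthPart, inner_sub_left, inner_smul_left, hx, mul_zero, sub_zero]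

lemma norm_inner_apply_le (A : E →L[ℂ] E) {x : E} (hx : ⟪Ψ, x⟫_ℂ = 0) :
    ‖⟪Ψ, A x⟫_ℂ‖ ≤ ‖orthPart Ψ (adjoint A Ψ)‖ * ‖x‖ := by
  rw [inner_apply_eq_inner_orthPart_adjoint A hx]
  exact norm_inner_le_norm _ _

lemma norm_inner_apply_le_one (hΨ : ‖Ψ‖ = 1) {U : E →L[ℂ] E} (hU : U ∈ unitary (E →L[ℂ] E)) :
    ‖⟪Ψ, U Ψ⟫_ℂ‖ ≤ 1 := by
  simpa [norm_map_of_mem_unitary hU, hΨ] using norm_inner_le_norm (𝕜 := ℂ) Ψ (U Ψ)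

lemma norm_inner_apply_sq (hΨ : ‖Ψ‖ = 1) {U : E →L[ℂ] E} (hU : U ∈ unitary (E →L[ℂ] E)) :
    ‖⟪Ψ, U Ψ⟫_ℂ‖ ^ 2 = 1 - ‖orthPart Ψ (U Ψ)‖ ^ 2 := by
  rw [eq_sub_iff_add_eq, norm_inner_sq_add_norm_orthPart_sq hΨ, norm_map_of_mem_unitary hU, hΨ,
    one_pow]

lemma exists_apply_apply_eq_smul_add (hΨ : ‖Ψ‖ = 1) {U V : E →L[ℂ] E}
    (hU : U ∈ unitary (E →L[ℂ] E)) (hV : V ∈ unitary (E →L[ℂ] E)) :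
    ∃ w : E, V (U Ψ) = (⟪Ψ, U Ψ⟫_ℂ * ⟪Ψ, V Ψ⟫_ℂ) • Ψ + w ∧
      ‖w‖ ≤ ‖orthPart Ψ (U Ψ)‖ + ‖orthPart Ψ (V Ψ)‖ ∧
      ‖⟪Ψ, w⟫_ℂ‖ ≤ ‖orthPart Ψ (adjoint V Ψ)‖ * ‖orthPart Ψ (U Ψ)‖ := by
  set a := ⟪Ψ, U Ψ⟫_ℂ
  set x := orthPart Ψ (U Ψ)
  set y := orthPart Ψ (V Ψ)
  have ha : ‖a‖ ≤ 1 := norm_inner_apply_le_one hΨ hU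
  refine ⟨a • y + V x, ?_, ?_, ?_⟩
  · conv_lhs => rw [← inner_smul_add_orthPart Ψ (U Ψ), map_add, map_smul,
      ← inner_smul_add_orthPart Ψ (V Ψ)]
    module
  · calc ‖a • y + V x‖ ≤ ‖a‖ * ‖y‖ + ‖x‖ :=
          norm_add_le_of_le (norm_smul_le _ _) (norm_map_of_mem_unitary hV x).le
      _ ≤ ‖x‖ + ‖y‖ := by nlinarith [norm_nonneg y]
  · rw [inner_add_right, inner_smul_right, inner_orthPart hΨ, mul_zero, zero_add]
    exact norm_inner_apply_le V (inner_orthPart hΨ _)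

end OrthPart

/-- Let `U_X`, `U_Y` be unitaries on a finite-dimensional Hilbert space, `Ψ₀` a unit
vector with projector `P₀ = |Ψ₀⟩⟨Ψ₀|`. With `δ_X = ‖(1−P₀)U_XΨ₀‖`, `δ_Y = ‖(1−P₀)U_YΨ₀‖`,
and assuming `‖(1−P₀)U_X†Ψ₀‖ = δ_X`, `‖(1−P₀)U_Y†Ψ₀‖ = δ_Y`, one has
`|⟨Ψ₀, U_Y†U_X†U_YU_X Ψ₀⟩ − 1| ≤ 2(δ_X² + δ_Y²) + 4δ_Xδ_Y + δ_X²δ_Y²`. -/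
theorem loop_overlap_estimate {E : Type*} [NormedAddCommGroup E] [InnerProductSpace ℂ E]
    [FiniteDimensional ℂ E]
    (UX UY : E →L[ℂ] E)
    (hUX : UX ∈ unitary (E →L[ℂ] E)) (hUY : UY ∈ unitary (E →L[ℂ] E))
    (Ψ₀ : E) (hΨ₀ : ‖Ψ₀‖ = 1) (δX δY : ℝ)
    (hδX : ‖UX Ψ₀ - ⟪Ψ₀, UX Ψ₀⟫_ℂ • Ψ₀‖ = δX)
    (hδY : ‖UY Ψ₀ - ⟪Ψ₀, UY Ψ₀⟫_ℂ • Ψ₀‖ = δY)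
    (hδX' : ‖(ContinuousLinearMap.adjoint UX) Ψ₀ -
      ⟪Ψ₀, (ContinuousLinearMap.adjoint UX) Ψ₀⟫_ℂ • Ψ₀‖ = δX)
    (hδY' : ‖(ContinuousLinearMap.adjoint UY) Ψ₀ -
      ⟪Ψ₀, (ContinuousLinearMap.adjoint UY) Ψ₀⟫_ℂ • Ψ₀‖ = δY) :
    ‖⟪Ψ₀, (ContinuousLinearMap.adjoint UY)
        ((ContinuousLinearMap.adjoint UX) (UY (UX Ψ₀)))⟫_ℂ - 1‖ ≤
      2 * (δX ^ 2 + δY ^ 2) + 4 * δX * δY + δX ^ 2 * δY ^ 2 := by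
  obtain ⟨w₁, hw₁, hnw₁, hiw₁⟩ := exists_apply_apply_eq_smul_add hΨ₀ hUY hUX
  obtain ⟨w₂, hw₂, hnw₂, hiw₂⟩ := exists_apply_apply_eq_smul_add hΨ₀ hUX hUY
  rw [adjoint_inner_right, adjoint_inner_right, hw₁, hw₂, mul_comm]
  refine (norm_inner_smul_add_smul_add_sub_one_le hΨ₀ _ w₁ w₂).trans ?_
  set a := ⟪Ψ₀, UX Ψ₀⟫_ℂ
  set b := ⟪Ψ₀, UY Ψ₀⟫_ℂ
  have hX : ‖orthPart Ψ₀ (UX Ψ₀)‖ = δX := hδX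
  have hY : ‖orthPart Ψ₀ (UY Ψ₀)‖ = δY := hδY
  have hX' : ‖orthPart Ψ₀ (adjoint UX Ψ₀)‖ = δX := hδX'
  have hY' : ‖orthPart Ψ₀ (adjoint UY Ψ₀)‖ = δY := hδY'
  simp only [hX, hY, hX', hY'] at hnw₁ hnw₂ hiw₁ hiw₂
  have hab : ‖a * b‖ ^ 2 = (1 - δX ^ 2) * (1 - δY ^ 2) := by
    rw [norm_mul, mul_pow, norm_inner_apply_sq hΨ₀ hUX, norm_inner_apply_sq hΨ₀ hUY, hX, hY]
  have hab1 : ‖a * b‖ ≤ 1 := by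
    rw [norm_mul]
    exact mul_le_one₀ (norm_inner_apply_le_one hΨ₀ hUX) (norm_nonneg b)
      (norm_inner_apply_le_one hΨ₀ hUY)
  have hdefect : |‖a * b‖ ^ 2 - 1| ≤ δX ^ 2 + δY ^ 2 + δX ^ 2 * δY ^ 2 := by
    rw [hab, abs_le]
    constructor <;> nlinarith [sq_nonneg δX, sq_nonneg δY]
  have hδX0 : 0 ≤ δX := hX ▸ norm_nonneg _
  have hδY0 : 0 ≤ δY := hY ▸ norm_nonneg _
  calc _ ≤ (δX ^ 2 + δY ^ 2 + δX ^ 2 * δY ^ 2) + 1 * (δX * δY + δY * δX)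
          + (δY + δX) * (δX + δY) := by gcongr
    _ = _ := by ring
end

section
/- Let Ψ₀ be a unit vector with projector P₀ = |Ψ₀⟩⟨Ψ₀|, Q₀ = 1 − P₀, let U₁, …, U_{N²} be unitaries on a Hilbert space, and define p_{[1,N²]} = ⟨Ψ₀, U_{N²}⋯U₁ Ψ₀⟩ and p_i = ⟨Ψ₀, U_i Ψ₀⟩. Then |p_{[1,N²]} − p₁p₂⋯p_{N²}| ≤ (N² − 1) · sup_{1 ≤ i ≤ N²} √(1 − |p_i|²). -/
open scoped InnerProductSpace

/-!
Write `p = ⟪Ψ₀, U Ψ₀⟫` and split `U Ψ₀ = p • Ψ₀ + r` with `r ⊥ Ψ₀`, so that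
`‖r‖ = √(‖U Ψ₀‖² - ‖p‖²) ≤ √(1 - ‖p‖²)`. If `T` is the product of the remaining factors, then
`⟪Ψ₀, T U Ψ₀⟫ = p ⟪Ψ₀, T Ψ₀⟫ + ⟪Ψ₀, T r⟫`, and the last term has modulus at most `‖r‖` as long as
`T` is a contraction. Peeling off one factor at a time and using `‖p‖ ≤ 1` adds up one such error
per factor except the last, for which `T = 1` and `⟪Ψ₀, r⟫ = 0`.
-/

theorem ContinuousLinearMap.norm_list_prod_le_one {𝕜 E : Type*} [NontriviallyNormedField 𝕜]
    [SeminormedAddCommGroup E] [NormedSpace 𝕜 E] {L : List (E →L[𝕜] E)}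
    (hL : ∀ T ∈ L, ‖T‖ ≤ 1) : ‖L.prod‖ ≤ 1 :=
  List.prod_induction (‖·‖ ≤ 1)
    (fun _ _ ha hb => (norm_mul_le _ _).trans (mul_le_one₀ ha (norm_nonneg _) hb)) norm_id_le hL

section

variable {𝕜 E : Type*} [RCLike 𝕜] [NormedAddCommGroup E] [InnerProductSpace 𝕜 E] {ψ : E}

theorem norm_sub_inner_smul_sq (hψ : ‖ψ‖ = 1) (v : E) :
    ‖v - ⟪ψ, v⟫_𝕜 • ψ‖ ^ 2 = ‖v‖ ^ 2 - ‖⟪ψ, v⟫_𝕜‖ ^ 2 := by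
  have horth : ⟪⟪ψ, v⟫_𝕜 • ψ, v - ⟪ψ, v⟫_𝕜 • ψ⟫_𝕜 = 0 := by
    rw [inner_smul_left, inner_sub_right, inner_smul_right, inner_self_eq_norm_sq_to_K, hψ]
    simp
  have h := norm_add_sq_eq_norm_sq_add_norm_sq_of_inner_eq_zero _ _ horth
  rw [add_sub_cancel, norm_smul, hψ, mul_one] at h
  simp only [sq]
  linarith

theorem norm_sub_inner_smul_le_sqrt (hψ : ‖ψ‖ = 1) {v : E} (hv : ‖v‖ ≤ 1) :
    ‖v - ⟪ψ, v⟫_𝕜 • ψ‖ ≤ √(1 - ‖⟪ψ, v⟫_𝕜‖ ^ 2) := by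
  rw [← Real.sqrt_sq (norm_nonneg _), norm_sub_inner_smul_sq hψ]
  gcongr
  exact pow_le_one₀ (norm_nonneg v) hv

theorem norm_inner_map_sub_inner_mul_le (hψ : ‖ψ‖ = 1) {T : E →L[𝕜] E} (hT : ‖T‖ ≤ 1) (v : E) :
    ‖⟪ψ, T v⟫_𝕜 - ⟪ψ, v⟫_𝕜 * ⟪ψ, T ψ⟫_𝕜‖ ≤ ‖v - ⟪ψ, v⟫_𝕜 • ψ‖ := by
  have hsplit : ⟪ψ, T v⟫_𝕜 - ⟪ψ, v⟫_𝕜 * ⟪ψ, T ψ⟫_𝕜 = ⟪ψ, T (v - ⟪ψ, v⟫_𝕜 • ψ)⟫_𝕜 := by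
    simp only [map_sub, map_smul, inner_sub_right, inner_smul_right]
  calc ‖⟪ψ, T v⟫_𝕜 - ⟪ψ, v⟫_𝕜 * ⟪ψ, T ψ⟫_𝕜‖
      ≤ ‖ψ‖ * ‖T (v - ⟪ψ, v⟫_𝕜 • ψ)‖ := hsplit ▸ norm_inner_le_norm _ _
    _ ≤ ‖v - ⟪ψ, v⟫_𝕜 • ψ‖ := by
      simpa [hψ] using T.le_of_opNorm_le hT (v - ⟪ψ, v⟫_𝕜 • ψ)

theorem norm_inner_map_le_one (hψ : ‖ψ‖ = 1) {T : E →L[𝕜] E} (hT : ‖T‖ ≤ 1) :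
    ‖⟪ψ, T ψ⟫_𝕜‖ ≤ 1 :=
  calc ‖⟪ψ, T ψ⟫_𝕜‖ ≤ ‖ψ‖ * ‖T ψ‖ := norm_inner_le_norm _ _
    _ ≤ 1 := by simpa [hψ] using T.le_of_opNorm_le hT ψ

theorem norm_inner_reverse_prod_sub_prod_inner_le (hψ : ‖ψ‖ = 1) {S : ℝ}
    (L : List (E →L[𝕜] E)) (hL : ∀ T ∈ L, ‖T‖ ≤ 1)
    (hS : ∀ T ∈ L, √(1 - ‖⟪ψ, T ψ⟫_𝕜‖ ^ 2) ≤ S) :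
    ‖⟪ψ, L.reverse.prod ψ⟫_𝕜 - (L.map fun T => ⟪ψ, T ψ⟫_𝕜).prod‖ ≤ (L.length - 1 : ℕ) * S := by
  induction L with
  | nil => simp [inner_self_eq_norm_sq_to_K, hψ]
  | cons U M ih =>
    obtain ⟨hU, hM⟩ := List.forall_mem_cons.1 hL
    obtain ⟨hSU, hSM⟩ := List.forall_mem_cons.1 hS
    rcases eq_or_ne M [] with rfl | hne
    · simp
    set T := M.reverse.prod
    set p := ⟪ψ, U ψ⟫_𝕜
    have hstep : ‖⟪ψ, T (U ψ)⟫_𝕜 - p * ⟪ψ, T ψ⟫_𝕜‖ ≤ S :=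
      (norm_inner_map_sub_inner_mul_le hψ (ContinuousLinearMap.norm_list_prod_le_one
        (fun _ h => hM _ (List.mem_reverse.1 h))) _).trans
        ((norm_sub_inner_smul_le_sqrt hψ (by simpa [hψ] using U.le_of_opNorm_le hU ψ)).trans hSU)
    have hlen : ((U :: M).length - 1 : ℕ) = (M.length - 1 : ℕ) + 1 := by
      have := List.length_pos_iff.2 hne
      simp only [List.length_cons]
      omega
    calc ‖⟪ψ, (U :: M).reverse.prod ψ⟫_𝕜 - ((U :: M).map fun T => ⟪ψ, T ψ⟫_𝕜).prod‖
        = ‖(⟪ψ, T (U ψ)⟫_𝕜 - p * ⟪ψ, T ψ⟫_𝕜) +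
            p * (⟪ψ, T ψ⟫_𝕜 - (M.map fun T => ⟪ψ, T ψ⟫_𝕜).prod)‖ := by
          rw [List.reverse_cons, List.prod_append, List.prod_singleton, mul_apply_eq_comp,
            List.map_cons, List.prod_cons]
          simp only [T, p]
          congr 1
          ring
      _ ≤ S + 1 * ((M.length - 1 : ℕ) * S) := by
          grw [norm_add_le, norm_mul, hstep, norm_inner_map_le_one hψ hU, ih hM hSM]
      _ = ((U :: M).length - 1 : ℕ) * S := by
          rw [hlen]
          push_cast
          ring

end

/-- Let `Ψ₀` be a unit vector, `U₁, …, U_{N²}` unitaries on a Hilbert space, and set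
`p_{[1,N²]} = ⟨Ψ₀, U_{N²}⋯U₁Ψ₀⟩`, `p_i = ⟨Ψ₀, U_iΨ₀⟩`. Then
`|p_{[1,N²]} − p₁⋯p_{N²}| ≤ (N² − 1) · sup_i √(1 − |p_i|²)`. -/
theorem telescoping_overlap_estimate {E : Type*} [NormedAddCommGroup E]
    [InnerProductSpace ℂ E] [CompleteSpace E]
    (N : ℕ) (hN : 0 < N) (U : Fin (N ^ 2) → (E →L[ℂ] E))
    (hU : ∀ i, U i ∈ unitary (E →L[ℂ] E))
    (Ψ₀ : E) (hΨ₀ : ‖Ψ₀‖ = 1) :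
    ‖⟪Ψ₀, ((List.ofFn U).reverse.prod) Ψ₀⟫_ℂ - ∏ i, ⟪Ψ₀, U i Ψ₀⟫_ℂ‖ ≤
      ((N : ℝ) ^ 2 - 1) *
        ⨆ i : Fin (N ^ 2), Real.sqrt (1 - ‖⟪Ψ₀, U i Ψ₀⟫_ℂ‖ ^ 2) := by
  have hcontr : ∀ T ∈ List.ofFn U, ‖T‖ ≤ 1 :=
    List.forall_mem_ofFn_iff.2 fun i => (U i).opNorm_le_bound zero_le_one fun x => by
      rw [ContinuousLinearMap.norm_map_of_mem_unitary (hU i), one_mul]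
  have hsup : ∀ T ∈ List.ofFn U, √(1 - ‖⟪Ψ₀, T Ψ₀⟫_ℂ‖ ^ 2) ≤
      ⨆ i : Fin (N ^ 2), √(1 - ‖⟪Ψ₀, U i Ψ₀⟫_ℂ‖ ^ 2) :=
    List.forall_mem_ofFn_iff.2 (le_ciSup (Finite.bddAbove_range _))
  have h := norm_inner_reverse_prod_sub_prod_inner_le hΨ₀ _ hcontr hsup
  rwa [List.map_ofFn, List.prod_ofFn, List.length_ofFn, Nat.cast_sub (Nat.one_le_pow _ _ hN),
    Nat.cast_pow, Nat.cast_one] at h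
end

section
/- Let z be a complex number with |z| = 1, let q be a positive integer, and let u_x, u_y be q×q complex matrices satisfying ‖u_x†u_x − 1‖ ≤ ε, ‖u_y†u_y − 1‖ ≤ ε, and ‖u_y† u_x† u_y u_x − z·1‖ ≤ ε for some ε with 0 ≤ ε ≤ 1/(4q). Then |1 − z^q| ≤ Cq²ε for a universal constant C (one may take C = 10, say), where the operator norm is used. -/
/-!
Every eigenvalue of a matrix within `ε` of `w • 1` lies within `ε` of `w`, so its determinant,
the product of its `q` eigenvalues, is within `(1 + ε) ^ q - 1 ≤ 2 q ε` of `w ^ q`. Hence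
`det (u_x† u_x)` and `det (u_y† u_y)` are within `2 q ε` of `1`, while their product, the
determinant of `u_y† u_x† u_y u_x`, is within `2 q ε` of `z ^ q`.
-/

open scoped Matrix.Norms.L2Operator

theorem spectrum.norm_sub_le_norm_sub_algebraMap {𝕜 A : Type*} [NormedField 𝕜] [NormedRing A]
    [NormedAlgebra 𝕜 A] [CompleteSpace A] [NormOneClass A] {a : A} {k : 𝕜} (w : 𝕜)
    (hk : k ∈ spectrum 𝕜 a) : ‖k - w‖ ≤ ‖a - algebraMap 𝕜 A w‖ :=
  spectrum.norm_le_norm_of_mem <| by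
    rw [← spectrum.sub_singleton_eq]
    exact Set.sub_mem_sub hk rfl

theorem Multiset.norm_prod_sub_pow_card_le {R : Type*} [NormedCommRing R] [NormOneClass R]
    {s : Multiset R} {w : R} {ε : ℝ} (h : ∀ a ∈ s, ‖a - w‖ ≤ ε) :
    ‖s.prod - w ^ card s‖ ≤ (‖w‖ + ε) ^ card s - ‖w‖ ^ card s := by
  induction s using Multiset.induction with
  | empty => simp
  | cons a s ih =>
    have ha : ‖a - w‖ ≤ ε := h a (mem_cons_self a s)
    have hs := ih fun b hb => h b (mem_cons_of_mem hb)
    have hprod : ‖s.prod‖ ≤ (‖w‖ + ε) ^ card s :=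
      calc ‖s.prod‖ ≤ ‖s.prod - w ^ card s‖ + ‖w‖ ^ card s :=
            (norm_le_norm_sub_add _ _).trans (by gcongr; exact norm_pow_le _ _)
        _ ≤ (‖w‖ + ε) ^ card s := by linarith
    rw [prod_cons, card_cons, pow_succ']
    calc ‖a * s.prod - w * w ^ card s‖
        = ‖(a - w) * s.prod + w * (s.prod - w ^ card s)‖ := by ring_nf
      _ ≤ ε * (‖w‖ + ε) ^ card s + ‖w‖ * ((‖w‖ + ε) ^ card s - ‖w‖ ^ card s) := by
          refine (norm_add_le _ _).trans (add_le_add ?_ ?_) <;> refine (norm_mul_le _ _).trans ?_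
          · gcongr
            exact (norm_nonneg _).trans ha
          · gcongr
      _ = (‖w‖ + ε) ^ (card s + 1) - ‖w‖ ^ (card s + 1) := by ring

theorem Matrix.norm_det_sub_pow_le {n : Type*} [Fintype n] [DecidableEq n] {A : Matrix n n ℂ}
    {w : ℂ} {ε : ℝ} (hA : ‖A - w • (1 : Matrix n n ℂ)‖ ≤ ε) :
    ‖A.det - w ^ Fintype.card n‖ ≤ (‖w‖ + ε) ^ Fintype.card n - ‖w‖ ^ Fintype.card n := by
  cases isEmpty_or_nonempty n
  · simp
  have hcard : Multiset.card A.charpoly.roots = Fintype.card n := by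
    rw [Polynomial.splits_iff_card_roots.mp (IsAlgClosed.splits _), charpoly_natDegree_eq_dim]
  have hroots : ∀ μ ∈ A.charpoly.roots, ‖μ - w‖ ≤ ε := fun μ hμ =>
    (spectrum.norm_sub_le_norm_sub_algebraMap w <| mem_spectrum_iff_isRoot_charpoly.mpr
      (Polynomial.isRoot_of_mem_roots hμ)).trans <| by rwa [Algebra.algebraMap_eq_smul_one]
  simpa only [det_eq_prod_roots_charpoly, hcard] using Multiset.norm_prod_sub_pow_card_le hroots

theorem Matrix.norm_det_sub_one_le {n : Type*} [Fintype n] [DecidableEq n] {A : Matrix n n ℂ}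
    {ε : ℝ} (hA : ‖A - 1‖ ≤ ε) : ‖A.det - 1‖ ≤ (1 + ε) ^ Fintype.card n - 1 := by
  rw [← one_smul ℂ (1 : Matrix n n ℂ)] at hA
  simpa only [norm_one, one_pow] using norm_det_sub_pow_le hA

theorem one_add_pow_le_one_add_two_mul {x : ℝ} (hx : 0 ≤ x) {n : ℕ} (hnx : n * x ≤ 1 / 2) :
    (1 + x) ^ n ≤ 1 + 2 * n * x := by
  induction n with
  | zero => simp
  | succ n ih =>
    push_cast at hnx ⊢
    have ih' := ih (by nlinarith)
    rw [pow_succ]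
    nlinarith [mul_nonneg (Nat.cast_nonneg (α := ℝ) n) hx]

/-- Let `z` be a complex number with `|z| = 1`, `q` a positive integer, and `u_x`, `u_y`
`q×q` matrices with `‖u_x†u_x − 1‖ ≤ ε`, `‖u_y†u_y − 1‖ ≤ ε`,
`‖u_y†u_x†u_yu_x − z·1‖ ≤ ε` (operator norm) for `0 ≤ ε ≤ 1/(4q)`.
Then `|1 − z^q| ≤ 10 q² ε`. -/
theorem root_of_unity_estimate (q : ℕ) (hq : 0 < q) (z : ℂ) (hz : ‖z‖ = 1)
    (ux uy : Matrix (Fin q) (Fin q) ℂ) (ε : ℝ) (hε0 : 0 ≤ ε) (hε : ε ≤ 1 / (4 * q))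
    (hx : ‖ux.conjTranspose * ux - 1‖ ≤ ε)
    (hy : ‖uy.conjTranspose * uy - 1‖ ≤ ε)
    (hcomm : ‖uy.conjTranspose * ux.conjTranspose * uy * ux - z • (1 : Matrix (Fin q) (Fin q) ℂ)‖ ≤ ε) :
    ‖(1 - z ^ q)‖ ≤ 10 * q ^ 2 * ε := by
  set δ := (1 + ε) ^ q - 1
  have hqε : q * ε ≤ 1 / 4 := by
    rw [le_div_iff₀ (by positivity)] at hε
    linarith
  have hδ : δ ≤ 2 * q * ε := by
    linarith [one_add_pow_le_one_add_two_mul hε0 (n := q) (by linarith)]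
  set dx := (ux.conjTranspose * ux).det
  set dy := (uy.conjTranspose * uy).det
  have hdx : ‖dx - 1‖ ≤ δ := by simpa only [Fintype.card_fin] using Matrix.norm_det_sub_one_le hx
  have hdy : ‖dy - 1‖ ≤ δ := by simpa only [Fintype.card_fin] using Matrix.norm_det_sub_one_le hy
  have hdet_comm : (uy.conjTranspose * ux.conjTranspose * uy * ux).det = dx * dy := by
    simp only [dx, dy, Matrix.det_mul]
    ring
  have hdz : ‖dx * dy - z ^ q‖ ≤ δ := by
    simpa only [hdet_comm, hz, one_pow, Fintype.card_fin] using Matrix.norm_det_sub_pow_le hcomm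
  have hprod : ‖dx * dy - 1‖ ≤ (1 + δ) ^ 2 - 1 := by
    simpa using Multiset.norm_prod_sub_pow_card_le (s := {dx, dy}) (w := 1)
      (by simpa using ⟨hdx, hdy⟩)
  have hq2 : (q : ℝ) ≤ q ^ 2 := by exact_mod_cast Nat.le_self_pow two_ne_zero q
  calc ‖1 - z ^ q‖ ≤ ‖1 - dx * dy‖ + ‖dx * dy - z ^ q‖ := norm_sub_le_norm_sub_add_norm_sub _ _ _
    _ ≤ (1 + δ) ^ 2 - 1 + δ := by rw [norm_sub_rev]; exact add_le_add hprod hdz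
    _ ≤ 10 * q ^ 2 * ε := by
      nlinarith [(norm_nonneg _).trans hdx, mul_le_mul_of_nonneg_right hq2 hε0]
end
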